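/- Define φ⁽⁰⁾(u) = 1 for u ∈ (0,1), and φ⁽ᵏ⁾(u) = ∫₀¹ φ⁽ᵏ⁻¹⁾(s) / √(s(s+u)) ds for k ≥ 1. Then for every k ≥ 1 and every v ∈ (0,1), φ⁽ᵏ⁾(v) ≤ 32^k · Σ_{i=0}^k (1/i!) · ((1/2) log(e²/v))^i ≤ 32^k · e / √v. -/

import Mathlib

open Real Finset

noncomputable def phiIter : ℕ → ℝ → ℝ
  | 0, _ => 1
  | k + 1, u => ∫ s in (0:ℝ)..1, phiIter k s / Real.sqrt (s * (s + u))

/-!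
Write `P_k(x) = ∑_{i ≤ k} x^i / i!` and `ℓ(s) = (2 - log s) / 4`. By induction,
`φ⁽ᵏ⁾(u) ≤ 8^k P_k(ℓ(u))` on `(0, 1]`; the theorem follows from `ℓ(u) ≤ (1/2) log(e² / u)`
and `P_k(x) ≤ eˣ`. For the inductive step split the integral at `s = u`. On `(u, 1]` the kernel
is at most `1 / s` and `P_k(ℓ(s)) / s = -4 (d/ds) P_{k+1}(ℓ(s))`. On `(0, u]` the kernel is at
most `1 / √(su)`, and `P_k(x + t) ≤ P_k(x) eᵗ` gives `P_k(ℓ(s)) ≤ P_k(ℓ(u)) (u/s)^{1/4}`;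
since `1/4 < 1/2` the resulting majorant `s^{-3/4}` is integrable. Each piece contributes at
most `4 P_{k+1}(ℓ(u))`.
-/

open Set MeasureTheory
open scoped Nat Interval

noncomputable def expPartialSum (k : ℕ) (x : ℝ) : ℝ :=
  ∑ i ∈ range (k + 1), 1 / (i ! : ℝ) * x ^ i

namespace expPartialSum

theorem nonneg (k : ℕ) {x : ℝ} (hx : 0 ≤ x) : 0 ≤ expPartialSum k x :=
  sum_nonneg fun _ _ => by positivity

theorem succ_eq (k : ℕ) (x : ℝ) :
    expPartialSum (k + 1) x = expPartialSum k x + x ^ (k + 1) / (k + 1)! := by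
  rw [expPartialSum, sum_range_succ, one_div_mul_eq_div]
  rfl

theorem le_succ (k : ℕ) {x : ℝ} (hx : 0 ≤ x) :
    expPartialSum k x ≤ expPartialSum (k + 1) x := by
  rw [succ_eq]
  exact le_add_of_nonneg_right (by positivity)

theorem monotoneOn (k : ℕ) : MonotoneOn (expPartialSum k) (Set.Ici 0) := fun x hx y _ hxy => by
  unfold expPartialSum
  gcongr

theorem le_exp (k : ℕ) {x : ℝ} (hx : 0 ≤ x) : expPartialSum k x ≤ exp x := by
  simpa only [expPartialSum, one_div_mul_eq_div] using sum_le_exp_of_nonneg hx (k + 1)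

theorem hasDerivAt (k : ℕ) (x : ℝ) :
    HasDerivAt (expPartialSum k) (expPartialSum k x - x ^ k / k !) x := by
  induction k with
  | zero =>
    have hconst : expPartialSum 0 = fun _ => 1 := by
      funext
      simp [expPartialSum]
    simpa [hconst] using hasDerivAt_const x (1 : ℝ)
  | succ k ih =>
    rw [show expPartialSum (k + 1) = _ from funext (succ_eq k)]
    refine (ih.add ((hasDerivAt_pow (k + 1) x).div_const ((k + 1)! : ℝ))).congr_deriv ?_
    beta_reduce
    rw [Nat.add_sub_cancel, Nat.factorial_succ]
    push_cast
    field_simp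
    ring

@[fun_prop]
theorem continuous (k : ℕ) : Continuous (expPartialSum k) :=
  continuous_iff_continuousAt.2 fun x => (hasDerivAt k x).continuousAt

/-- `t ↦ e⁻ᵗ P_k(x + t)` is antitone: its derivative is `-e⁻ᵗ (x + t)^k / k!`. -/
theorem add_le_mul_exp (k : ℕ) {x t : ℝ} (hx : 0 ≤ x) (ht : 0 ≤ t) :
    expPartialSum k (x + t) ≤ expPartialSum k x * exp t := by
  have hanti : AntitoneOn (fun t => exp (-t) * expPartialSum k (x + t)) (Set.Ici 0) := by
    refine antitoneOn_of_hasDerivWithinAt_nonpos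
      (f' := fun t => -(exp (-t) * ((x + t) ^ k / k !))) (convex_Ici 0) (by fun_prop)
      (fun t _ => ?_) (fun t ht => ?_)
    · have hP := (hasDerivAt k (x + t)).comp t ((hasDerivAt_id t).const_add x)
      refine (((hasDerivAt_neg t).exp.mul hP).congr_deriv ?_).hasDerivWithinAt
      simp only [Function.comp_apply, mul_one, mul_neg]
      ring
    · rw [interior_Ici] at ht
      have : 0 ≤ x + t := by linarith [ht.out]
      simp only [Left.neg_nonpos_iff]
      positivity
  have := hanti self_mem_Ici ht ht
  simp only [neg_zero, exp_zero, one_mul, add_zero] at this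
  rwa [exp_neg, inv_mul_le_iff₀ (exp_pos t), mul_comm] at this

end expPartialSum

theorem intervalIntegral.integral_mono_of_nonneg {f g : ℝ → ℝ} {a b : ℝ} (hab : a ≤ b)
    (hf : ∀ x ∈ Set.Ioc a b, 0 ≤ f x) (hg : IntervalIntegrable g volume a b)
    (hfg : ∀ x ∈ Set.Ioc a b, f x ≤ g x) : ∫ x in a..b, f x ≤ ∫ x in a..b, g x := by
  rw [integral_of_le hab, integral_of_le hab]
  exact MeasureTheory.integral_mono_of_nonneg
    (ae_restrict_of_forall_mem measurableSet_Ioc hf) hg.1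
    (ae_restrict_of_forall_mem measurableSet_Ioc hfg)

theorem two_sub_log_div_four_nonneg {s : ℝ} (hs : s ∈ Set.Ioc 0 1) : 0 ≤ (2 - log s) / 4 := by
  linarith [log_nonpos hs.1.le hs.2]

noncomputable def phiBound (k : ℕ) (s : ℝ) : ℝ := expPartialSum k ((2 - log s) / 4)

theorem phiBound_nonneg (k : ℕ) {s : ℝ} (hs : s ∈ Set.Ioc 0 1) : 0 ≤ phiBound k s :=
  expPartialSum.nonneg k (two_sub_log_div_four_nonneg hs)

theorem phiBound_le_succ (k : ℕ) {s : ℝ} (hs : s ∈ Set.Ioc 0 1) :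
    phiBound k s ≤ phiBound (k + 1) s :=
  expPartialSum.le_succ k (two_sub_log_div_four_nonneg hs)

theorem phiBound_div_sqrt_le {k : ℕ} {s u : ℝ} (hs : 0 < s) (hsu : s ≤ u) (hu : u ≤ 1) :
    phiBound k s / √(s * u) ≤ phiBound k u / u ^ (1 / 4 : ℝ) * s ^ (-3 / 4 : ℝ) := by
  have hu0 : 0 < u := hs.trans_le hsu
  have hshift : phiBound k s ≤ phiBound k u * exp ((log u - log s) / 4) := by
    rw [phiBound, phiBound, show (2 - log s) / 4 = (2 - log u) / 4 + (log u - log s) / 4 by ring]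
    exact expPartialSum.add_le_mul_exp k (two_sub_log_div_four_nonneg ⟨hu0, hu⟩)
      (by linarith [log_le_log hs hsu])
  have hexp :
      exp ((log u - log s) / 4) / √(s * u) = 1 / u ^ (1 / 4 : ℝ) * s ^ (-3 / 4 : ℝ) := by
    rw [sqrt_eq_rpow, rpow_def_of_pos (mul_pos hs hu0), rpow_def_of_pos hu0, rpow_def_of_pos hs,
      log_mul hs.ne' hu0.ne', ← exp_sub, one_div (rexp _), ← exp_neg, ← exp_add]
    ring_nf
  calc phiBound k s / √(s * u) ≤ phiBound k u * exp ((log u - log s) / 4) / √(s * u) := by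
        gcongr
    _ = phiBound k u / u ^ (1 / 4 : ℝ) * s ^ (-3 / 4 : ℝ) := by
        rw [mul_div_assoc, hexp]
        ring

theorem hasDerivAt_phiBound_succ (k : ℕ) {s : ℝ} (hs : 0 < s) :
    HasDerivAt (phiBound (k + 1)) (-(phiBound k s / (4 * s))) s := by
  have hlog := ((hasDerivAt_log hs.ne').const_sub 2).div_const 4
  refine ((expPartialSum.hasDerivAt (k + 1) _).comp s hlog).congr_deriv ?_
  rw [expPartialSum.succ_eq, add_sub_cancel_right, phiBound]
  field_simp

theorem intervalIntegrable_phiBound_div (k : ℕ) {u : ℝ} (hu : u ∈ Set.Ioc 0 1) :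
    IntervalIntegrable (fun s => phiBound k s / s) volume u 1 := by
  have hne : ∀ s ∈ uIcc u 1, s ≠ 0 := fun s hs =>
    (hu.1.trans_le (by rw [uIcc_of_le hu.2] at hs; exact hs.1)).ne'
  exact (((expPartialSum.continuous k).comp_continuousOn
    ((continuousOn_const.sub (continuousOn_log.mono hne)).div_const 4)).div
      continuousOn_id hne).intervalIntegrable

theorem integral_phiBound_div_le (k : ℕ) {u : ℝ} (hu : u ∈ Set.Ioc 0 1) :
    ∫ s in u..1, phiBound k s / s ≤ 4 * phiBound (k + 1) u := by
  have hderiv : ∀ s ∈ uIcc u 1,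
      HasDerivAt (fun s => -4 * phiBound (k + 1) s) (phiBound k s / s) s := by
    intro s hs
    rw [uIcc_of_le hu.2] at hs
    refine ((hasDerivAt_phiBound_succ k (hu.1.trans_le hs.1)).const_mul (-4)).congr_deriv ?_
    field_simp
  rw [intervalIntegral.integral_eq_sub_of_hasDerivAt hderiv (intervalIntegrable_phiBound_div k hu)]
  linarith [phiBound_nonneg (k + 1) (right_mem_Ioc.2 zero_lt_one)]

theorem integral_rpow_neg_three_quarters (u : ℝ) :
    ∫ s in (0 : ℝ)..u, s ^ (-3 / 4 : ℝ) = 4 * u ^ (1 / 4 : ℝ) := by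
  rw [integral_rpow (Or.inl (by norm_num)), zero_rpow (by norm_num)]
  norm_num
  ring

section integrandMajorant

variable {k : ℕ} {C u : ℝ}

noncomputable def integrandMajorant (k : ℕ) (C u s : ℝ) : ℝ :=
  if s ≤ u then C * (phiBound k u / u ^ (1 / 4 : ℝ)) * s ^ (-3 / 4 : ℝ)
  else C * (phiBound k s / s)

theorem integrandMajorant_of_mem_near {s : ℝ} (hu : 0 ≤ u) (hs : s ∈ Ι 0 u) :
    integrandMajorant k C u s = C * (phiBound k u / u ^ (1 / 4 : ℝ)) * s ^ (-3 / 4 : ℝ) :=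
  if_pos (by rw [uIoc_of_le hu] at hs; exact hs.2)

theorem integrandMajorant_of_mem_far {s : ℝ} (hu : u ≤ 1) (hs : s ∈ Ι u 1) :
    integrandMajorant k C u s = C * (phiBound k s / s) :=
  if_neg (by rw [uIoc_of_le hu] at hs; exact hs.1.not_ge)

theorem div_sqrt_le_integrandMajorant (hC : 0 ≤ C) {s y : ℝ} (hs : s ∈ Set.Ioc 0 1)
    (hu : u ∈ Set.Ioc 0 1) (hy : y ≤ C * phiBound k s) :
    y / √(s * (s + u)) ≤ integrandMajorant k C u s := by
  have hdiv : ∀ d, 0 < d → d ≤ √(s * (s + u)) →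
      y / √(s * (s + u)) ≤ C * phiBound k s / d :=
    fun d hd hdle => div_le_div₀ (mul_nonneg hC (phiBound_nonneg k hs)) hy hd hdle
  unfold integrandMajorant
  split_ifs with hsu
  · calc y / √(s * (s + u)) ≤ C * phiBound k s / √(s * u) :=
          hdiv _ (sqrt_pos.2 (mul_pos hs.1 hu.1)) (sqrt_le_sqrt (by nlinarith [hs.1]))
      _ ≤ C * (phiBound k u / u ^ (1 / 4 : ℝ)) * s ^ (-3 / 4 : ℝ) := by
          rw [mul_div_assoc, mul_assoc]
          gcongr
          exact phiBound_div_sqrt_le hs.1 hsu hu.2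
  · calc y / √(s * (s + u)) ≤ C * phiBound k s / s :=
          hdiv _ hs.1 (le_sqrt_of_sq_le (by nlinarith [hs.1, hu.1]))
      _ = C * (phiBound k s / s) := mul_div_assoc _ _ _

theorem intervalIntegrable_integrandMajorant_near (hu : 0 ≤ u) :
    IntervalIntegrable (integrandMajorant k C u) volume 0 u :=
  ((intervalIntegral.intervalIntegrable_rpow' (by norm_num)).const_mul _).congr
    fun _ hs => (integrandMajorant_of_mem_near hu hs).symm

theorem intervalIntegrable_integrandMajorant_far (hu : u ∈ Set.Ioc 0 1) :
    IntervalIntegrable (integrandMajorant k C u) volume u 1 :=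
  ((intervalIntegrable_phiBound_div k hu).const_mul C).congr
    fun _ hs => (integrandMajorant_of_mem_far hu.2 hs).symm

theorem integral_integrandMajorant_le (hC : 0 ≤ C) (hu : u ∈ Set.Ioc 0 1) :
    ∫ s in (0 : ℝ)..1, integrandMajorant k C u s ≤ 8 * C * phiBound (k + 1) u := by
  have hu4 : u ^ (1 / 4 : ℝ) ≠ 0 := (rpow_pos_of_pos hu.1 _).ne'
  rw [← intervalIntegral.integral_add_adjacent_intervals
      (intervalIntegrable_integrandMajorant_near hu.1.le)
      (intervalIntegrable_integrandMajorant_far hu),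
    intervalIntegral.integral_congr_ae (ae_of_all _ fun _ => integrandMajorant_of_mem_near hu.1.le),
    intervalIntegral.integral_congr_ae (ae_of_all _ fun _ => integrandMajorant_of_mem_far hu.2),
    intervalIntegral.integral_const_mul, intervalIntegral.integral_const_mul,
    integral_rpow_neg_three_quarters]
  have hnear :
      C * (phiBound k u / u ^ (1 / 4 : ℝ)) * (4 * u ^ (1 / 4 : ℝ)) = 4 * C * phiBound k u := by
    field_simp
  rw [hnear]
  linarith [mul_le_mul_of_nonneg_left (integral_phiBound_div_le k hu) hC,
    mul_le_mul_of_nonneg_left (phiBound_le_succ k hu) hC]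

end integrandMajorant

theorem phiIter_nonneg (k : ℕ) (u : ℝ) : 0 ≤ phiIter k u := by
  induction k generalizing u with
  | zero => exact zero_le_one
  | succ k ih =>
    exact intervalIntegral.integral_nonneg zero_le_one fun s _ => div_nonneg (ih s) (sqrt_nonneg _)

theorem phiIter_succ_le {k : ℕ} {C : ℝ} (hC : 0 ≤ C)
    (h : ∀ s ∈ Set.Ioc 0 1, phiIter k s ≤ C * phiBound k s) {u : ℝ}
    (hu : u ∈ Set.Ioc 0 1) :
    phiIter (k + 1) u ≤ 8 * C * phiBound (k + 1) u :=
  calc phiIter (k + 1) u ≤ ∫ s in (0 : ℝ)..1, integrandMajorant k C u s :=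
        intervalIntegral.integral_mono_of_nonneg zero_le_one
          (fun s _ => div_nonneg (phiIter_nonneg k s) (sqrt_nonneg _))
          ((intervalIntegrable_integrandMajorant_near hu.1.le).trans
            (intervalIntegrable_integrandMajorant_far hu))
          (fun s hs => div_sqrt_le_integrandMajorant hC hs hu (h s hs))
    _ ≤ 8 * C * phiBound (k + 1) u := integral_integrandMajorant_le hC hu

theorem phiIter_le_phiBound (k : ℕ) {u : ℝ} (hu : u ∈ Set.Ioc 0 1) :
    phiIter k u ≤ 8 ^ k * phiBound k u := by
  induction k generalizing u with
  | zero => simp [phiIter, phiBound, expPartialSum]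
  | succ k ih =>
    rw [pow_succ, mul_comm _ (8 : ℝ)]
    exact phiIter_succ_le (by positivity) (fun s hs => ih hs) hu

theorem stmt_4_general (k : ℕ) (v : ℝ) (hv : v ∈ Set.Ioo (0:ℝ) 1) :
    phiIter k v ≤ 32 ^ k * ∑ i ∈ Finset.range (k + 1),
        (1 / (Nat.factorial i : ℝ)) * ((1 / 2) * Real.log (Real.exp 2 / v)) ^ i ∧
    32 ^ k * ∑ i ∈ Finset.range (k + 1),
        (1 / (Nat.factorial i : ℝ)) * ((1 / 2) * Real.log (Real.exp 2 / v)) ^ i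
      ≤ 32 ^ k * Real.exp 1 / Real.sqrt v := by
  obtain ⟨hv0, hv1⟩ := hv
  have hv : v ∈ Set.Ioc 0 1 := ⟨hv0, hv1.le⟩
  have harg : (1 / 2) * log (exp 2 / v) = (2 - log v) / 2 := by
    rw [log_div (exp_ne_zero 2) hv0.ne', log_exp]
    ring
  have hexp : exp ((2 - log v) / 2) = exp 1 / √v := by
    rw [sqrt_eq_rpow, rpow_def_of_pos hv0, ← exp_sub]
    ring_nf
  have hℓ := two_sub_log_div_four_nonneg hv
  change phiIter k v ≤ 32 ^ k * expPartialSum k _ ∧ 32 ^ k * expPartialSum k _ ≤ _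
  rw [harg]
  constructor
  · calc phiIter k v ≤ 8 ^ k * phiBound k v := phiIter_le_phiBound k hv
      _ ≤ 32 ^ k * expPartialSum k ((2 - log v) / 2) :=
        mul_le_mul (pow_le_pow_left₀ (by norm_num) (by norm_num) k)
          (expPartialSum.monotoneOn k hℓ (show 0 ≤ (2 - log v) / 2 by linarith) (by linarith))
          (phiBound_nonneg k hv) (by positivity)
  · calc 32 ^ k * expPartialSum k ((2 - log v) / 2) ≤ 32 ^ k * exp ((2 - log v) / 2) := by
          gcongr
          exact expPartialSum.le_exp k (by linarith)
      _ = 32 ^ k * exp 1 / √v := by rw [hexp, mul_div_assoc]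

theorem stmt_4 (k : ℕ) (hk : 1 ≤ k) (v : ℝ) (hv : v ∈ Set.Ioo (0:ℝ) 1) :
    phiIter k v ≤ 32 ^ k * ∑ i ∈ Finset.range (k + 1),
        (1 / (Nat.factorial i : ℝ)) * ((1 / 2) * Real.log (Real.exp 2 / v)) ^ i ∧
    32 ^ k * ∑ i ∈ Finset.range (k + 1),
        (1 / (Nat.factorial i : ℝ)) * ((1 / 2) * Real.log (Real.exp 2 / v)) ^ i
      ≤ 32 ^ k * Real.exp 1 / Real.sqrt v :=
  stmt_4_general k v hv
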